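/- Let n ≥ 0, r ≥ 1, let S be an arbitrary subset of ℝ^r, and let F be a homogeneous polynomial of degree n+2 in r real variables such that every iterated partial derivative of F of order ≤ n (including F itself) vanishes at every point of S. Then F vanishes at every linear combination of n+1 points of S: for all p₀,…,p_n ∈ S and all y₀,…,y_n ∈ ℝ, F(y₀p₀ + y₁p₁ + … + y_np_n) = 0. (This is the key step showing that the n-th prolongation of the space of quadratics vanishing on a variety V is contained in the degree-(n+2) part of the ideal of the (n+1)-th secant variety of V.) -/

import Mathlib

/-!
Write `D_v = ∑ vᵢ ∂ᵢ`. For `F` homogeneous of degree `d`, Euler's identity makes `D_v^d F` the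
constant `d! F(v)`. Expanding `D_x^(n+2)` for `x = ∑ yᵢ pᵢ` by multilinearity gives a combination of
words of length `n + 2` in the `n + 1` pairwise commuting operators `D_{pᵢ}`; each word repeats some
letter `c`, so it equals `D_{p_c}² H` where `H`, obtained from `F` by `n` directional derivatives,
is a quadratic form vanishing at `p_c`. By Euler again `D_{p_c}² H = 2 H(p_c) = 0`.
-/

open MvPolynomial

theorem sum_smul_pow_eq_sum_prod_ofFn {R A ι : Type*} [CommSemiring R] [Semiring A] [Algebra R A]
    [Fintype ι] [DecidableEq ι] (y : ι → R) (a : ι → A) (d : ℕ) :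
    (∑ i, y i • a i) ^ d = ∑ r : Fin d → ι, (∏ k, y (r k)) • (List.ofFn fun k => a (r k)).prod := by
  rw [← MultilinearMap.mkPiAlgebraFin_apply_const (R := R),
    MultilinearMap.map_sum (MultilinearMap.mkPiAlgebraFin R d A) fun _ i => y i • a i]
  simp only [MultilinearMap.map_smul_univ, MultilinearMap.mkPiAlgebraFin_apply]

namespace MvPolynomial

variable {R σ : Type*}

theorem pderiv_pderiv_comm [CommRing R] (i j : σ) (φ : MvPolynomial σ R) :
    pderiv i (pderiv j φ) = pderiv j (pderiv i φ) := by
  classical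
  have : ⁅pderiv i, pderiv j⁆ = (0 : Derivation R (MvPolynomial σ R) (MvPolynomial σ R)) :=
    derivation_ext fun k => by
      rw [Derivation.commutator_apply, pderiv_X, pderiv_X, Pi.single_apply, Pi.single_apply]
      split_ifs <;> simp
  rw [← sub_eq_zero, ← Derivation.commutator_apply, this, Derivation.zero_apply]

theorem eval_eq_eval_of_isHomogeneous_zero [CommSemiring R] {φ : MvPolynomial σ R}
    (hφ : φ.IsHomogeneous 0) (v w : σ → R) : eval v φ = eval w φ := by
  rw [← totalDegree_zero_iff_isHomogeneous, totalDegree_eq_zero_iff_eq_C] at hφ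
  rw [hφ, eval_C, eval_C]

def VanishesToOrderOn [CommSemiring R] (S : Set (σ → R)) (k : ℕ) (φ : MvPolynomial σ R) : Prop :=
  ∀ L : List σ, L.length < k → ∀ p ∈ S, eval p (L.foldr (fun i Q => pderiv i Q) φ) = 0

theorem VanishesToOrderOn.eval_eq_zero [CommSemiring R] {S : Set (σ → R)} {k : ℕ}
    {φ : MvPolynomial σ R} (h : VanishesToOrderOn S (k + 1) φ) {p : σ → R} (hp : p ∈ S) :
    eval p φ = 0 :=
  h [] k.succ_pos p hp

section Fintype

variable [Fintype σ]

section CommSemiring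

variable [CommSemiring R]

noncomputable def dirDeriv : (σ → R) →ₗ[R] Module.End R (MvPolynomial σ R) :=
  Fintype.linearCombination R fun i => (pderiv i).toLinearMap

theorem dirDeriv_apply (v : σ → R) (φ : MvPolynomial σ R) :
    dirDeriv v φ = ∑ i, v i • pderiv i φ := by
  simp [dirDeriv, Fintype.linearCombination_apply]

theorem IsHomogeneous.dirDeriv {φ : MvPolynomial σ R} {n : ℕ} (hφ : φ.IsHomogeneous (n + 1))
    (v : σ → R) : (dirDeriv v φ).IsHomogeneous n := by
  rw [dirDeriv_apply]
  exact IsHomogeneous.sum _ _ _ fun i _ => smul_eq_C_mul (pderiv i φ) (v i) ▸ hφ.pderiv.C_mul _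

theorem IsHomogeneous.prod_dirDeriv {φ : MvPolynomial σ R} {k : ℕ} (l : List (σ → R))
    (hφ : φ.IsHomogeneous (k + l.length)) :
    ((l.map MvPolynomial.dirDeriv).prod φ).IsHomogeneous k := by
  induction l generalizing k with
  | nil => simpa using hφ
  | cons v l ih =>
    rw [List.map_cons, List.prod_cons, Module.End.mul_apply]
    exact (ih (by rwa [List.length_cons, add_comm l.length, ← add_assoc] at hφ)).dirDeriv v

theorem eval_dirDeriv_self {φ : MvPolynomial σ R} {n : ℕ} (hφ : φ.IsHomogeneous n) (v : σ → R) :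
    eval v (dirDeriv v φ) = n * eval v φ := by
  simpa [dirDeriv_apply, smul_eval, nsmul_eq_mul] using congr(eval v $(hφ.sum_X_mul_pderiv))

theorem eval_dirDeriv_pow {φ : MvPolynomial σ R} {d : ℕ} (hφ : φ.IsHomogeneous d) (v w : σ → R) :
    eval w ((dirDeriv v ^ d) φ) = d.factorial * eval v φ := by
  induction d generalizing φ with
  | zero => simpa using eval_eq_eval_of_isHomogeneous_zero hφ w v
  | succ d ih =>
    rw [pow_succ, Module.End.mul_apply, ih (hφ.dirDeriv v), eval_dirDeriv_self hφ,
      Nat.factorial_succ]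
    push_cast
    ring

theorem foldr_pderiv_dirDeriv (L : List σ) (v : σ → R) (φ : MvPolynomial σ R) :
    L.foldr (fun i Q => pderiv i Q) (dirDeriv v φ) =
      ∑ i, v i • (L ++ [i]).foldr (fun i Q => pderiv i Q) φ := by
  induction L with
  | nil => simp [dirDeriv_apply]
  | cons j L ih => simp [ih]

theorem VanishesToOrderOn.dirDeriv {S : Set (σ → R)} {k : ℕ} {φ : MvPolynomial σ R}
    (h : VanishesToOrderOn S (k + 1) φ) (v : σ → R) : VanishesToOrderOn S k (dirDeriv v φ) := by
  intro L hL p hp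
  rw [foldr_pderiv_dirDeriv, map_sum]
  exact Finset.sum_eq_zero fun i _ => by
    rw [smul_eval, h _ (by simpa using hL) p hp, mul_zero]

theorem VanishesToOrderOn.prod_dirDeriv {S : Set (σ → R)} {k : ℕ} {φ : MvPolynomial σ R}
    (l : List (σ → R)) (h : VanishesToOrderOn S (k + l.length) φ) :
    VanishesToOrderOn S k ((l.map MvPolynomial.dirDeriv).prod φ) := by
  induction l generalizing k with
  | nil => simpa using h
  | cons v l ih =>
    rw [List.map_cons, List.prod_cons, Module.End.mul_apply]
    exact (ih (by rwa [List.length_cons, add_comm l.length, ← add_assoc] at h)).dirDeriv v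

end CommSemiring

section CommRing

variable [CommRing R]

theorem commute_dirDeriv (v w : σ → R) : Commute (dirDeriv v) (dirDeriv w) := by
  simp only [dirDeriv, Fintype.linearCombination_apply]
  refine Commute.sum_left _ _ _ fun i _ => Commute.sum_right _ _ _ fun j _ => ?_
  have : Commute (pderiv (R := R) i).toLinearMap (pderiv j).toLinearMap :=
    LinearMap.ext fun φ => by simpa using pderiv_pderiv_comm i j φ
  exact (this.smul_left _).smul_right _

theorem eval_prod_dirDeriv_eq_zero_of_duplicate {S : Set (σ → R)} {m : ℕ} {φ : MvPolynomial σ R}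
    (hφ : φ.IsHomogeneous (m + 2)) (hS : VanishesToOrderOn S (m + 1) φ) {l : List (σ → R)}
    (hl : l.length = m + 2) {c : σ → R} (hc : c ∈ S) (hdup : l.Duplicate c) (w : σ → R) :
    eval w ((l.map dirDeriv).prod φ) = 0 := by
  obtain ⟨t, ht⟩ := (List.duplicate_iff_sublist.mp hdup).exists_perm_append
  have ht_len : t.length = m := by
    have := ht.length_eq
    simp only [List.length_append, List.length_cons, List.length_nil, hl] at this
    omega
  have hprod : (l.map dirDeriv).prod = dirDeriv c ^ 2 * (t.map dirDeriv).prod := by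
    rw [(ht.map _).prod_eq' (List.pairwise_map.mpr (List.pairwise_of_forall commute_dirDeriv))]
    simp [pow_two, mul_assoc]
  have hH : ((t.map dirDeriv).prod φ).IsHomogeneous 2 :=
    IsHomogeneous.prod_dirDeriv t (by rwa [ht_len, add_comm])
  have hHS : VanishesToOrderOn S 1 ((t.map dirDeriv).prod φ) :=
    VanishesToOrderOn.prod_dirDeriv t (by rwa [ht_len, add_comm])
  rw [hprod, Module.End.mul_apply, eval_dirDeriv_pow hH c w, hHS.eval_eq_zero hc, mul_zero]

end CommRing

end Fintype

end MvPolynomial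

theorem stmt_9 (n r : ℕ) (S : Set (Fin r → ℝ))
    (F : MvPolynomial (Fin r) ℝ) (hF : F.IsHomogeneous (n + 2))
    (hvan : ∀ L : List (Fin r), L.length ≤ n → ∀ p ∈ S,
      MvPolynomial.eval p (L.foldr (fun v Q => MvPolynomial.pderiv v Q) F) = 0)
    (p : Fin (n + 1) → (Fin r → ℝ)) (hp : ∀ i, p i ∈ S)
    (y : Fin (n + 1) → ℝ) :
    MvPolynomial.eval (∑ i, y i • p i) F = 0 := by
  have hS : VanishesToOrderOn S (n + 1) F := fun L hL => hvan L (Nat.lt_succ_iff.mp hL)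
  have hword (s : Fin (n + 2) → Fin (n + 1)) :
      eval 0 ((List.ofFn fun k => dirDeriv (p (s k))).prod F) = 0 := by
    obtain ⟨c, hc⟩ : ∃ c, (List.ofFn fun k => p (s k)).Duplicate c := by
      rw [List.exists_duplicate_iff_not_nodup, List.nodup_ofFn]
      intro hinj
      simpa using Fintype.card_le_of_injective s hinj.of_comp
    obtain ⟨k, rfl⟩ := List.mem_ofFn.mp hc.mem
    have := eval_prod_dirDeriv_eq_zero_of_duplicate hF hS List.length_ofFn (hp _) hc 0
    rwa [List.map_ofFn] at this
  have hfactorial : ((n + 2).factorial : ℝ) * eval (∑ i, y i • p i) F = 0 := by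
    rw [← eval_dirDeriv_pow hF _ 0, map_sum]
    simp only [map_smul, sum_smul_pow_eq_sum_prod_ofFn, LinearMap.sum_apply,
      LinearMap.smul_apply, map_sum, smul_eval, hword, mul_zero, Finset.sum_const_zero]
  exact (mul_eq_zero.mp hfactorial).resolve_left (by positivity)
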